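/- In a totally ordered similarity space (W,S,≤), for any subsets A, B of W and any c ∈ V: if A ⊆ U_c(B), then ◇≤A ⊆ U_c(◇≤B); the same statement holds with the upward closure ◇≥ in place of ◇≤. In particular, A ⊆ B implies ◇≤A ⊆ ◇≤B. -/

import Mathlib

/-- A finite t-norm: a finite subset `V` of the real unit interval containing `0` and `1`,
equipped with an associative, commutative, monotone operation with neutral element `1`. -/
structure FiniteTNorm where
  V : Set ℝ
  finite : V.Finite
  subset : V ⊆ Set.Icc (0 : ℝ) 1
  zero_mem : (0 : ℝ) ∈ V
  one_mem : (1 : ℝ) ∈ V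
  op : V → V → V
  op_assoc : ∀ a b c, op (op a b) c = op a (op b c)
  op_comm : ∀ a b, op a b = op b a
  op_one : ∀ a, op a ⟨1, one_mem⟩ = a
  op_mono : ∀ a b c d : V, (a : ℝ) ≤ (b : ℝ) → (c : ℝ) ≤ (d : ℝ) → (op a c : ℝ) ≤ (op b d : ℝ)

def FiniteTNorm.one (T : FiniteTNorm) : T.V := ⟨1, T.one_mem⟩

def FiniteTNorm.zero (T : FiniteTNorm) : T.V := ⟨0, T.zero_mem⟩

/-- A finite similarity space based on the finite t-norm `T`. -/
structure SimilaritySpace (T : FiniteTNorm) (W : Type) [Fintype W] [Nonempty W] where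
  S : W → W → T.V
  eq_one_iff : ∀ u v, S u v = T.one ↔ u = v
  symm : ∀ u v, S u v = S v u
  triangle : ∀ u v w, (T.op (S u v) (S v w) : ℝ) ≤ (S u w : ℝ)

/-- The `c`-neighbourhood `U_c(A)` of a set `A` of worlds. -/
def SimilaritySpace.nbhd {T : FiniteTNorm} {W : Type} [Fintype W] [Nonempty W]
    (sp : SimilaritySpace T W) (c : T.V) (A : Set W) : Set W :=
  {w | ∃ a ∈ A, (c : ℝ) ≤ (sp.S w a : ℝ)}

/-- A totally ordered similarity space: a finite similarity space together with a total
order compatible with the similarity. -/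
structure TOSimilaritySpace (T : FiniteTNorm) (W : Type) [Fintype W] [Nonempty W]
    [LinearOrder W] extends SimilaritySpace T W where
  compat : ∀ u v w : W, u ≤ v → v ≤ w → (S u w : ℝ) ≤ min (S u v : ℝ) (S v w : ℝ)

/-- The downward closure `◇≤ A`. -/
def dcl {W : Type} [LinearOrder W] (A : Set W) : Set W := {v | ∃ w ∈ A, v ≤ w}

/-- The upward closure `◇≥ A`. -/
def ucl {W : Type} [LinearOrder W] (A : Set W) : Set W := {v | ∃ w ∈ A, w ≤ v}

/-! If `v ≤ w`, `w ∈ A` and `S(w, b) ≥ c` with `b ∈ B`, then either `v ≤ b`, so `v` already lies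
in `◇≤B`, or `b ≤ v ≤ w`, and compatibility of the order gives `S(v, b) ≥ S(w, b) ≥ c`. -/

theorem FiniteTNorm.coe_le_one (T : FiniteTNorm) (a : T.V) : (a : ℝ) ≤ 1 :=
  (T.subset a.2).2

namespace SimilaritySpace

variable {T : FiniteTNorm} {W : Type} [Fintype W] [Nonempty W] (sp : SimilaritySpace T W)

theorem S_self (v : W) : sp.S v v = T.one :=
  (sp.eq_one_iff v v).2 rfl

theorem subset_nbhd (c : T.V) (A : Set W) : A ⊆ sp.nbhd c A := fun v hv =>
  ⟨v, hv, by rw [sp.S_self]; exact T.coe_le_one c⟩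

end SimilaritySpace

namespace TOSimilaritySpace

variable {T : FiniteTNorm} {W : Type} [Fintype W] [Nonempty W] [LinearOrder W]
  (sp : TOSimilaritySpace T W)

theorem S_le_S_left {u v w : W} (huv : u ≤ v) (hvw : v ≤ w) :
    (sp.S u w : ℝ) ≤ sp.S u v :=
  (sp.compat u v w huv hvw).trans (min_le_left _ _)

theorem S_le_S_right {u v w : W} (huv : u ≤ v) (hvw : v ≤ w) :
    (sp.S u w : ℝ) ≤ sp.S v w :=
  (sp.compat u v w huv hvw).trans (min_le_right _ _)

theorem dcl_subset_nbhd_dcl {c : T.V} {A B : Set W} (h : A ⊆ sp.nbhd c B) :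
    dcl A ⊆ sp.nbhd c (dcl B) := by
  rintro v ⟨w, hwA, hvw⟩
  obtain ⟨b, hbB, hcwb⟩ := h hwA
  rcases le_total v b with hvb | hbv
  · exact sp.subset_nbhd c _ ⟨b, hbB, hvb⟩
  · refine ⟨b, ⟨b, hbB, le_rfl⟩, ?_⟩
    calc (c : ℝ) ≤ sp.S w b := hcwb
      _ = sp.S b w := by rw [sp.symm]
      _ ≤ sp.S b v := sp.S_le_S_left hbv hvw
      _ = sp.S v b := by rw [sp.symm]

theorem ucl_subset_nbhd_ucl {c : T.V} {A B : Set W} (h : A ⊆ sp.nbhd c B) :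
    ucl A ⊆ sp.nbhd c (ucl B) := by
  rintro v ⟨w, hwA, hwv⟩
  obtain ⟨b, hbB, hcwb⟩ := h hwA
  rcases le_total b v with hbv | hvb
  · exact sp.subset_nbhd c _ ⟨b, hbB, hbv⟩
  · exact ⟨b, ⟨b, hbB, le_rfl⟩, hcwb.trans (sp.S_le_S_right hwv hvb)⟩

end TOSimilaritySpace

theorem dcl_mono {W : Type} [LinearOrder W] {A B : Set W} (h : A ⊆ B) : dcl A ⊆ dcl B :=
  fun _ ⟨w, hwA, hvw⟩ => ⟨w, h hwA, hvw⟩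

theorem ucl_mono {W : Type} [LinearOrder W] {A B : Set W} (h : A ⊆ B) : ucl A ⊆ ucl B :=
  fun _ ⟨w, hwA, hwv⟩ => ⟨w, h hwA, hwv⟩

/-- In a totally ordered similarity space, if `A ⊆ U_c(B)` then
`◇≤A ⊆ U_c(◇≤B)`, and likewise for `◇≥`; in particular `A ⊆ B` implies
`◇≤A ⊆ ◇≤B` (and `◇≥A ⊆ ◇≥B`). -/
theorem toss_nbhd_closure_mono {T : FiniteTNorm} {W : Type}
    [Fintype W] [Nonempty W] [LinearOrder W]
    (sp : TOSimilaritySpace T W) (A B : Set W) (c : T.V) :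
    (A ⊆ sp.toSimilaritySpace.nbhd c B → dcl A ⊆ sp.toSimilaritySpace.nbhd c (dcl B)) ∧
    (A ⊆ sp.toSimilaritySpace.nbhd c B → ucl A ⊆ sp.toSimilaritySpace.nbhd c (ucl B)) ∧
    (A ⊆ B → dcl A ⊆ dcl B) ∧ (A ⊆ B → ucl A ⊆ ucl B) :=
  ⟨sp.dcl_subset_nbhd_dcl, sp.ucl_subset_nbhd_ucl, dcl_mono, ucl_mono⟩
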